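/- arXiv:2009.10487 — 3 statements merged into one kernel-verified Lean document; each statement's English description precedes it below -/
import Mathlib

section
/- Assume F is algebraically closed of characteristic zero. Let Φ_f = (K_{m,m}, F^×, φ, f) be a skew gain graph whose underlying graph is the complete bipartite graph K_{m,m} with parts {u_1, …, u_m} and {w_1, …, w_m}, and let B be the m×m matrix with (i, j)-entry φ(u_i, w_j), so that the adjacency matrix of Φ_f is the block matrix A(Φ_f) = [[0, B], [(B^f)^T, 0]], where B^f is obtained from B by applying f entrywise. Then μ ∈ F is an eigenvalue of the Laplacian matrix L(Φ_f) = mI − A(Φ_f) if and only if (m − μ)² is an eigenvalue of B·(B^f)^T. -/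
open scoped Classical
open Matrix Finset SimpleGraph

variable {F V : Type*}

/-- The adjacency matrix of a skew gain graph `(G, φ)`: the `(u,v)` entry is the skew gain
`φ u v` if `u` and `v` are adjacent, and `0` otherwise. -/
noncomputable def sgAdj [Fintype V] [Field F] (G : SimpleGraph V) (φ : V → V → F) :
    Matrix V V F :=
  Matrix.of fun u v => if G.Adj u v then φ u v else 0

/-- The degree of a vertex `v` of `G`, i.e. the number of its neighbours. -/
noncomputable def sgDeg [Fintype V] (G : SimpleGraph V) (v : V) : ℕ :=
  (Finset.univ.filter fun u => G.Adj v u).card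

/-- The Laplacian matrix `L(Φ_f) = D(Φ_f) - A(Φ_f)` of a skew gain graph. -/
noncomputable def sgLap [Fintype V] [DecidableEq V] [Field F] (G : SimpleGraph V)
    (φ : V → V → F) : Matrix V V F :=
  Matrix.diagonal (fun v => (sgDeg G v : F)) - sgAdj G φ

/-!
`K_{m,m}` is `m`-regular, so `μ` is a Laplacian eigenvalue iff `m - μ` is an eigenvalue of the
adjacency matrix `[[0, B], [(B^f)ᵀ, 0]]`; the skew-gain condition `φ(w, u) = f(φ(u, w))` is what
identifies the lower block with `(B^f)ᵀ`. For a block matrix `[[0, B], [C, 0]]`, an eigenvector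
`(x, y)` for `ν` gives `B C x = ν² x`, and conversely `B C z = ν² z` gives the eigenvector
`(ν z, C z)`; the degenerate cases `x = 0` and `C z = 0` force `ν = 0`.
-/

namespace Matrix

variable {K n : Type*} [Field K] [Fintype n]

lemma fromBlocks_zero_mulVec_sumElim_eq_smul_iff (B C : Matrix n n K) (x y : n → K) (ν : K) :
    fromBlocks 0 B C 0 *ᵥ Sum.elim x y = ν • Sum.elim x y ↔
      B *ᵥ y = ν • x ∧ C *ᵥ x = ν • y := by
  simp [fromBlocks_mulVec, funext_iff, Sum.forall, eq_comm]

-- For `ν = 0` squareness of `B` is needed: a kernel vector of `B` then makes `B * C` singular.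
theorem exists_fromBlocks_zero_mulVec_eq_smul_iff [DecidableEq n] (B C : Matrix n n K) (ν : K) :
    (∃ v, v ≠ 0 ∧ fromBlocks 0 B C 0 *ᵥ v = ν • v) ↔ ∃ z, z ≠ 0 ∧ (B * C) *ᵥ z = ν ^ 2 • z := by
  constructor
  · rintro ⟨v, hv0, hv⟩
    rw [← Sum.elim_comp_inl_inr v, fromBlocks_zero_mulVec_sumElim_eq_smul_iff] at hv
    obtain ⟨hBy, hCx⟩ := hv
    by_cases hx : v ∘ Sum.inl = 0
    · have hy : v ∘ Sum.inr ≠ 0 := fun hy ↦ hv0 (by rw [← Sum.elim_comp_inl_inr v, hx, hy]; simp)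
      have hν : ν = 0 := by
        rw [hx, mulVec_zero, eq_comm, smul_eq_zero] at hCx
        exact hCx.resolve_right hy
      have hBC : (B * C).det = 0 := by
        rw [det_mul, (exists_mulVec_eq_zero_iff.mp ⟨_, hy, by rw [hBy, hν, zero_smul]⟩), zero_mul]
      obtain ⟨z, hz0, hz⟩ := exists_mulVec_eq_zero_iff.mpr hBC
      exact ⟨z, hz0, by rw [hz, hν]; simp⟩
    · refine ⟨_, hx, ?_⟩
      rw [← mulVec_mulVec, hCx, mulVec_smul, hBy, smul_smul, sq]
  · rintro ⟨z, hz0, hz⟩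
    by_cases hCz : C *ᵥ z = 0
    · have hν : ν = 0 := by
        rw [← mulVec_mulVec, hCz, mulVec_zero, eq_comm, smul_eq_zero] at hz
        exact pow_eq_zero_iff two_ne_zero |>.mp (hz.resolve_right hz0)
      refine ⟨Sum.elim z 0, fun h ↦ hz0 (by simpa using congrArg (· ∘ Sum.inl) h), ?_⟩
      rw [fromBlocks_zero_mulVec_sumElim_eq_smul_iff, hCz, hν]
      simp
    · refine ⟨Sum.elim (ν • z) (C *ᵥ z), fun h ↦ hCz (by simpa using congrArg (· ∘ Sum.inr) h), ?_⟩
      rw [fromBlocks_zero_mulVec_sumElim_eq_smul_iff, mulVec_mulVec, hz, mulVec_smul, smul_smul,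
        sq]
      exact ⟨rfl, rfl⟩

end Matrix

section CompleteBipartite

variable {α β : Type*} [Fintype α] [Fintype β]

lemma sgDeg_completeBipartiteGraph_inl (a : α) :
    sgDeg (completeBipartiteGraph α β) (Sum.inl a) = Fintype.card β := by
  have : (univ.filter fun u ↦ (completeBipartiteGraph α β).Adj (.inl a) u) = univ.map .inr := by
    ext (_ | _) <;> simp
  rw [sgDeg, this, card_map, card_univ]

lemma sgDeg_completeBipartiteGraph_inr (b : β) :
    sgDeg (completeBipartiteGraph α β) (Sum.inr b) = Fintype.card α := by
  have : (univ.filter fun u ↦ (completeBipartiteGraph α β).Adj (.inr b) u) = univ.map .inl := by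
    ext (_ | _) <;> simp
  rw [sgDeg, this, card_map, card_univ]

lemma sgAdj_completeBipartiteGraph [Field F] (φ : α ⊕ β → α ⊕ β → F) :
    sgAdj (completeBipartiteGraph α β) φ =
      fromBlocks 0 (of fun a b ↦ φ (.inl a) (.inr b)) (of fun b a ↦ φ (.inr b) (.inl a)) 0 := by
  ext (_ | _) (_ | _) <;> simp [sgAdj]

end CompleteBipartite

lemma sgLap_mulVec_eq_smul_iff_of_forall_sgDeg_eq [Fintype V] [DecidableEq V] [Field F]
    {G : SimpleGraph V} {d : ℕ} (hd : ∀ v, sgDeg G v = d) (φ : V → V → F)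
    (y : V → F) (μ : F) :
    sgLap G φ *ᵥ y = μ • y ↔ sgAdj G φ *ᵥ y = ((d : F) - μ) • y := by
  simp only [funext_iff, sgLap, sub_mulVec, Pi.sub_apply, mulVec_diagonal, hd, Pi.smul_apply,
    smul_eq_mul]
  refine forall_congr' fun v ↦ ?_
  constructor <;> intro h <;> linear_combination -h

theorem skewGainCompleteBipartite_laplacian_eigenvalues_general
    [Field F] (m : ℕ)
    (f : F → F)
    (φ : (Fin m ⊕ Fin m) → (Fin m ⊕ Fin m) → F)
    (hφ0 : ∀ u v, (completeBipartiteGraph (Fin m) (Fin m)).Adj u v → φ u v ≠ 0)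
    (hφf : ∀ u v, (completeBipartiteGraph (Fin m) (Fin m)).Adj u v → φ v u = f (φ u v))
    (B Bf : Matrix (Fin m) (Fin m) F)
    (hB : ∀ i j, B i j = φ (Sum.inl i) (Sum.inr j))
    (hBf : ∀ i j, Bf i j = if B i j ≠ 0 then f (B i j) else 0) :
    ∀ μ : F,
      (∃ y : (Fin m ⊕ Fin m) → F, y ≠ 0 ∧
          (sgLap (completeBipartiteGraph (Fin m) (Fin m)) φ).mulVec y = μ • y) ↔
        (∃ z : Fin m → F, z ≠ 0 ∧
          (B * Bf.transpose).mulVec z = ((m : F) - μ) ^ 2 • z) := by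
  intro μ
  have hregular : ∀ v, sgDeg (completeBipartiteGraph (Fin m) (Fin m)) v = m := by
    rintro (i | j)
    · simpa using sgDeg_completeBipartiteGraph_inl (β := Fin m) i
    · simpa using sgDeg_completeBipartiteGraph_inr (α := Fin m) j
  have hBfT : Bfᵀ = of fun j i ↦ φ (.inr j) (.inl i) := by
    ext j i
    have hadj : (completeBipartiteGraph (Fin m) (Fin m)).Adj (.inl i) (.inr j) := by simp
    rw [transpose_apply, hBf, hB, if_pos (hφ0 _ _ hadj), ← hφf _ _ hadj, of_apply]
  have hB' : B = of fun i j ↦ φ (.inl i) (.inr j) := ext hB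
  simp_rw [sgLap_mulVec_eq_smul_iff_of_forall_sgDeg_eq hregular, sgAdj_completeBipartiteGraph,
    ← hB', ← hBfT]
  exact exists_fromBlocks_zero_mulVec_eq_smul_iff B Bfᵀ _

/-- **Laplacian eigenvalues of skew gain graphs on `K_{m,m}`** (Theorem 2.10).
Let `Φ_f` be a skew gain graph on the complete bipartite graph `K_{m,m}` and let `B` be the
`m × m` matrix of skew gains from the first part to the second, `B^f` its entrywise image
under `f`.  Over an algebraically closed field, `μ` is an eigenvalue of the Laplacian
`L(Φ_f)` if and only if `(m - μ)²` is an eigenvalue of `B * (B^f)ᵀ`. -/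
theorem skewGainCompleteBipartite_laplacian_eigenvalues
    [Field F] [CharZero F] [IsAlgClosed F] (m : ℕ)
    (f : F → F) (hf0 : f 0 = 0) (hf1 : f 1 = 1)
    (hfmul : ∀ x y : F, f (x * y) = f x * f y) (hfinv : ∀ x : F, f (f x) = x)
    (φ : (Fin m ⊕ Fin m) → (Fin m ⊕ Fin m) → F)
    (hφ0 : ∀ u v, (completeBipartiteGraph (Fin m) (Fin m)).Adj u v → φ u v ≠ 0)
    (hφf : ∀ u v, (completeBipartiteGraph (Fin m) (Fin m)).Adj u v → φ v u = f (φ u v))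
    (B Bf : Matrix (Fin m) (Fin m) F)
    (hB : ∀ i j, B i j = φ (Sum.inl i) (Sum.inr j))
    (hBf : ∀ i j, Bf i j = if B i j ≠ 0 then f (B i j) else 0) :
    ∀ μ : F,
      (∃ y : (Fin m ⊕ Fin m) → F, y ≠ 0 ∧
          (sgLap (completeBipartiteGraph (Fin m) (Fin m)) φ).mulVec y = μ • y) ↔
        (∃ z : Fin m → F, z ≠ 0 ∧
          (B * Bf.transpose).mulVec z = ((m : F) - μ) ^ 2 • z) :=
  skewGainCompleteBipartite_laplacian_eigenvalues_general m f φ hφ0 hφf B Bf hB hBf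
end

section
/- Let Φ_f = (K_{1,n}, F^×, φ, f) be a skew gain graph whose underlying graph is the star K_{1,n} (one center adjacent to n leaves, n ≥ 1), and suppose δ ∈ F satisfies δ² = (n+1)² − 4·det(L(Φ_f)). Then the characteristic polynomial of L(Φ_f) factors as det(xI − L(Φ_f)) = (x − 1)^{n−1} · (x − (n+1+δ)/2) · (x − (n+1−δ)/2); that is, the Laplacian spectrum of Φ_f consists of (n+1+δ)/2 and (n+1−δ)/2 each with multiplicity 1, and 1 with multiplicity n−1. -/
open scoped Classical
open Matrix Finset SimpleGraph

variable {F V : Type*}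

/-!
Ordering the centre first, `L(Φ_f) = [[n, -b], [-c, 1]]` is an arrowhead matrix. For
`M = [[A, B], [C, d • 1]]`, right multiplication by `[[d • 1, 0], [-C, 1]]` clears `C`, so
`det M * d ^ k = det (d • A - B * C) * d ^ m` (`k`, `m` the block sizes) with no invertibility
assumption. For a `1 × 1` corner `a` and a cancellable `d` this reads
`det M = d ^ (m - 1) * (d * a - B * C)`; taking `d = X - 1` over `F[X]` and `d = 1` over `F` gives
`charpoly L = (X - 1) ^ (n - 1) * (X ^ 2 - (n + 1) * X + det L)`, and `δ` is a square root of the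
discriminant of the quadratic factor.
-/

namespace Matrix

variable {R ι n : Type*} [CommRing R] [Fintype ι] [Fintype n] [DecidableEq ι] [DecidableEq n]

theorem det_fromBlocks_scalar₂₂_mul_pow (A : Matrix ι ι R) (B : Matrix ι n R)
    (C : Matrix n ι R) (d : R) :
    (fromBlocks A B C (scalar n d)).det * d ^ Fintype.card ι =
      (d • A - B * C).det * d ^ Fintype.card n := by
  have hfactor : fromBlocks A B C (scalar n d) * fromBlocks (scalar ι d) 0 (-C) 1 =
      fromBlocks (d • A - B * C) B 0 (scalar n d) := by
    rw [fromBlocks_multiply]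
    congr 1 <;> simp [sub_eq_add_neg, ← smul_eq_diagonal_mul, ← smul_eq_mul_diagonal]
  have := congrArg det hfactor
  rw [det_mul, det_fromBlocks_zero₁₂, det_fromBlocks_zero₂₁, det_one, mul_one] at this
  simpa only [scalar_apply, det_diagonal, prod_const, card_univ] using this

open Polynomial in
theorem charmatrix_scalar (r : R) : charmatrix (scalar n r) = scalar n (X - Polynomial.C r) := by
  rw [scalar_apply, charmatrix_diagonal, scalar_apply]

theorem det_fromBlocks_scalar_of_unique [IsDomain R] [Unique ι] [Nonempty n] (a : R)
    (B : Matrix ι n R) (C : Matrix n ι R) {d : R} (hd : d ≠ 0) :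
    (fromBlocks (scalar ι a) B C (scalar n d)).det =
      d ^ (Fintype.card n - 1) * (d * a - (B * C) default default) := by
  apply mul_right_cancel₀ hd
  have h := det_fromBlocks_scalar₂₂_mul_pow (scalar ι a) B C d
  rw [Fintype.card_unique, pow_one, det_unique (d • scalar ι a - B * C)] at h
  rw [h, ← Nat.sub_add_cancel (Fintype.card_pos (α := n)), pow_succ, Nat.add_sub_cancel]
  simp only [sub_apply, smul_apply, scalar_apply, diagonal_apply_eq, smul_eq_mul]
  ring

open Polynomial in
theorem charpoly_fromBlocks_scalar_of_unique [IsDomain R] [Unique ι] [Nonempty n] (a d : R)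
    (B : Matrix ι n R) (C : Matrix n ι R) :
    (fromBlocks (scalar ι a) B C (scalar n d)).charpoly =
      (X - Polynomial.C d) ^ (Fintype.card n - 1) *
        ((X - Polynomial.C d) * (X - Polynomial.C a) - Polynomial.C ((B * C) default default)) := by
  rw [charpoly, charmatrix_fromBlocks, charmatrix_scalar, charmatrix_scalar,
    det_fromBlocks_scalar_of_unique _ _ _ (X_sub_C_ne_zero d),
    Matrix.neg_mul, Matrix.mul_neg, neg_neg, ← Matrix.map_mul, map_apply]

end Matrix

theorem sq_sub_mul_add_eq_mul_sub_mul_sub {K : Type*} [Field K] [NeZero (2 : K)]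
    {b c s : K} (h : s ^ 2 = b ^ 2 - 4 * c) (x : K) :
    x ^ 2 - b * x + c = (x - (b + s) / 2) * (x - (b - s) / 2) := by
  field_simp
  linear_combination h

section CompleteBipartite

variable {W : Type*} [Fintype V] [Fintype W]

theorem sgDeg_completeBipartiteGraph_inl_s7 (v : V) :
    sgDeg (completeBipartiteGraph V W) (Sum.inl v) = Fintype.card W := by
  rw [sgDeg, Finset.card_filter, Fintype.sum_sum_type]
  simp

theorem sgDeg_completeBipartiteGraph_inr_s7 (w : W) :
    sgDeg (completeBipartiteGraph V W) (Sum.inr w) = Fintype.card V := by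
  rw [sgDeg, Finset.card_filter, Fintype.sum_sum_type]
  simp

variable [DecidableEq V] [DecidableEq W] [Field F]

theorem sgLap_completeBipartiteGraph (φ : V ⊕ W → V ⊕ W → F) :
    sgLap (completeBipartiteGraph V W) φ =
      fromBlocks (scalar V (Fintype.card W : F)) (-of fun v w => φ (.inl v) (.inr w))
        (-of fun w v => φ (.inr w) (.inl v)) (scalar W (Fintype.card V : F)) := by
  ext (v | w) (v' | w') <;>
    simp [sgLap, sgAdj, sgDeg_completeBipartiteGraph_inl_s7, sgDeg_completeBipartiteGraph_inr_s7,
      diagonal_apply, Matrix.natCast_apply]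

end CompleteBipartite

section Star

variable {W : Type*} [Fintype V] [Unique V] [DecidableEq V] [Fintype W] [DecidableEq W]
  [Field F] (φ : V ⊕ W → V ⊕ W → F)

theorem det_sgLap_star [Nonempty W] :
    (sgLap (completeBipartiteGraph V W) φ).det =
      Fintype.card W - ∑ w, φ (.inl default) (.inr w) * φ (.inr w) (.inl default) := by
  rw [sgLap_completeBipartiteGraph, Fintype.card_unique (α := V), Nat.cast_one,
    det_fromBlocks_scalar_of_unique _ _ _ one_ne_zero]
  simp [mul_apply]

open Polynomial in
theorem charpoly_sgLap_star [Nonempty W] :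
    (sgLap (completeBipartiteGraph V W) φ).charpoly =
      (X - 1) ^ (Fintype.card W - 1) * ((X - 1) * (X - (Fintype.card W : F[X])) -
        C (∑ w, φ (.inl default) (.inr w) * φ (.inr w) (.inl default))) := by
  rw [sgLap_completeBipartiteGraph, charpoly_fromBlocks_scalar_of_unique]
  simp [mul_apply]

end Star

theorem skewGainStar_laplacian_spectrum_general
    [Field F] [CharZero F] (n : ℕ) (hn : 1 ≤ n)
    (φ : (Fin 1 ⊕ Fin n) → (Fin 1 ⊕ Fin n) → F)
    (δ : F)
    (hδ : δ ^ 2 = ((n : F) + 1) ^ 2 -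
      4 * (sgLap (completeBipartiteGraph (Fin 1) (Fin n)) φ).det) :
    ∀ x : F,
      (x • (1 : Matrix (Fin 1 ⊕ Fin n) (Fin 1 ⊕ Fin n) F) -
          sgLap (completeBipartiteGraph (Fin 1) (Fin n)) φ).det =
        (x - 1) ^ (n - 1) * (x - ((n : F) + 1 + δ) / 2) * (x - ((n : F) + 1 - δ) / 2) := by
  have : NeZero n := ⟨by omega⟩
  intro x
  have hdet := det_sgLap_star φ
  rw [Fintype.card_fin] at hdet
  rw [smul_one_eq_diagonal, ← scalar_apply, ← eval_charpoly, charpoly_sgLap_star,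
    Fintype.card_fin, mul_assoc, ← sq_sub_mul_add_eq_mul_sub_mul_sub hδ]
  simp only [Polynomial.eval_mul, Polynomial.eval_pow, Polynomial.eval_sub, Polynomial.eval_X,
    Polynomial.eval_one, Polynomial.eval_natCast, Polynomial.eval_C]
  linear_combination -(x - 1) ^ (n - 1) * hdet

/-- **Laplacian spectrum of a skew gain star** (Theorem 2.12).
For a skew gain graph on the star `K_{1,n}` (modelled as the complete bipartite graph with
parts `Fin 1` and `Fin n`, the single vertex being the center), if `δ` is a square root of
`(n+1)² - 4 det L(Φ_f)`, then the Laplacian characteristic polynomial factors as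
`(x-1)^(n-1) (x - (n+1+δ)/2) (x - (n+1-δ)/2)`; that is, the Laplacian spectrum consists of
`(n+1+δ)/2` and `(n+1-δ)/2` with multiplicity `1` each and `1` with multiplicity `n-1`. -/
theorem skewGainStar_laplacian_spectrum
    [Field F] [CharZero F] (n : ℕ) (hn : 1 ≤ n)
    (f : F → F) (hf0 : f 0 = 0) (hf1 : f 1 = 1)
    (hfmul : ∀ x y : F, f (x * y) = f x * f y) (hfinv : ∀ x : F, f (f x) = x)
    (φ : (Fin 1 ⊕ Fin n) → (Fin 1 ⊕ Fin n) → F)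
    (hφ0 : ∀ u v, (completeBipartiteGraph (Fin 1) (Fin n)).Adj u v → φ u v ≠ 0)
    (hφf : ∀ u v, (completeBipartiteGraph (Fin 1) (Fin n)).Adj u v → φ v u = f (φ u v))
    (δ : F)
    (hδ : δ ^ 2 = ((n : F) + 1) ^ 2 -
      4 * (sgLap (completeBipartiteGraph (Fin 1) (Fin n)) φ).det) :
    ∀ x : F,
      (x • (1 : Matrix (Fin 1 ⊕ Fin n) (Fin 1 ⊕ Fin n) F) -
          sgLap (completeBipartiteGraph (Fin 1) (Fin n)) φ).det =
        (x - 1) ^ (n - 1) * (x - ((n : F) + 1 + δ) / 2) * (x - ((n : F) + 1 - δ) / 2) :=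
  skewGainStar_laplacian_spectrum_general n hn φ δ hδ
end

section
/- Let Φ_f = (C_n, F^×, φ, f) be a skew gain graph whose underlying graph is the cycle C_n on n ≥ 3 vertices, and fix for each edge e an element s(e) ∈ F with s(e)² = g(φ(e)). Then det(L_g(Φ_f)) = 2·∏_{e ∈ E(C_n)} s(e) − (φ(C_n) + f(φ(C_n))). -/
open scoped Classical
open Matrix Finset SimpleGraph

variable {F V : Type*}

/-- The skew gain `φ(W)` of a walk `W`: the product of the skew gains of its oriented edges. -/
noncomputable def walkGain [Field F] {G : SimpleGraph V} {u v : V} (φ : V → V → F)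
    (w : G.Walk u v) : F :=
  (w.darts.map fun d => φ d.fst d.snd).prod

/-- The `g`-degree of a vertex `v`: the sum, over the edges `e` incident to `v`, of the chosen
square roots `s e` of `g(φ(e))`. -/
noncomputable def sgGDeg [Fintype V] [DecidableEq V] [Field F] (G : SimpleGraph V)
    (s : Sym2 V → F) (v : V) : F :=
  ∑ e ∈ Finset.univ.filter (fun e : Sym2 V => e ∈ G.edgeSet ∧ v ∈ e), s e

/-- The `g`-Laplacian matrix `L_g(Φ_f) = D_g(Φ_f) - A(Φ_f)` of a skew gain graph, relative to
the chosen square roots `s e` of `g(φ(e))`. -/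
noncomputable def sgGLap [Fintype V] [DecidableEq V] [Field F] (G : SimpleGraph V)
    (φ : V → V → F) (s : Sym2 V → F) : Matrix V V F :=
  Matrix.diagonal (sgGDeg G s) - sgAdj G φ

/-!
Write `t i = s(i, i+1)`, `a i = -φ(i, i+1)` and `b i = -φ(i+1, i) = -f(φ(i, i+1))`, so that
`a i * b i = t i ^ 2 ≠ 0`. Then `L_g` is the cyclic tridiagonal matrix with diagonal
`t (i-1) + t i`, superdiagonal `a` and subdiagonal `b`, and it factors as `Bᵀ * C` with `B`, `C`
cyclic bidiagonal: `B` has diagonal `t` and superdiagonal `b`, `C` has diagonal `1` and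
superdiagonal `a / t`. Only the identity and the rotation contribute to the Leibniz expansion of
a cyclic bidiagonal matrix, so its determinant is `∏ x - ∏ (-y)`. Hence
`det L_g = (∏ t - ∏ (-b)) * (1 - ∏ (-a) / ∏ t) = 2 ∏ t - ∏ (-a) - ∏ (-b)`, because
`∏ (-a) * ∏ (-b) = (∏ t) ^ 2`; finally `∏ (-b) = f (∏ (-a))` as `f` is multiplicative.
-/

namespace Fin

variable {n : ℕ}

theorem add_one_ne_self (i : Fin (n + 2)) : i + 1 ≠ i := by simp

theorem sub_one_ne_self (i : Fin (n + 2)) : i - 1 ≠ i := by simp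

theorem add_one_ne_sub_one (i : Fin (n + 3)) : i + 1 ≠ i - 1 := by
  rw [Ne, eq_sub_iff_add_eq, add_assoc, add_eq_left, Fin.ext_iff, Fin.val_add, Fin.val_one,
    Nat.mod_eq_of_lt (by omega)]
  simp

end Fin

theorem Equiv.Perm.eq_one_or_eq_finRotate {n : ℕ} {σ : Perm (Fin (n + 2))}
    (h : ∀ i, σ i = i ∨ σ i = i + 1) : σ = 1 ∨ σ = finRotate (n + 2) := by
  by_cases hid : ∀ i, σ i = i
  · exact .inl (Equiv.ext hid)
  right
  obtain ⟨i₀, hi₀⟩ := not_forall.mp hid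
  -- a point moved by `σ` goes to its successor, which by injectivity is then moved too
  have hstep : ∀ j, σ j = j + 1 → σ (j + 1) = j + 1 + 1 := fun j hj =>
    (h (j + 1)).resolve_left fun hfix => j.add_one_ne_self (σ.injective (hfix.trans hj.symm))
  have hpow : ∀ k : ℕ, σ ((finRotate (n + 2) ^ k) i₀) = (finRotate (n + 2) ^ k) i₀ + 1 := by
    intro k
    induction k with
    | zero => exact (h i₀).resolve_left hi₀
    | succ k ih => rw [pow_succ', Perm.mul_apply, finRotate_apply]; exact hstep _ ih
  ext1 j
  have hmoves : ∀ i, finRotate (n + 2) i ≠ i := fun i => by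
    rw [finRotate_apply]; exact i.add_one_ne_self
  obtain ⟨k, rfl⟩ := isCycle_finRotate.exists_pow_eq (hmoves i₀) (hmoves j)
  rw [hpow, finRotate_apply]

namespace Matrix

variable {R : Type*} {n : ℕ}

def cyclicBidiagonal [Zero R] [NeZero n] (x y : Fin n → R) : Matrix (Fin n) (Fin n) R :=
  of fun i j => if j = i then x i else if j = i + 1 then y i else 0

def cyclicTridiagonal [Zero R] [NeZero n] (d a b : Fin n → R) : Matrix (Fin n) (Fin n) R :=
  of fun i j => if j = i then d i else if j = i + 1 then a i else if i = j + 1 then b j else 0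

theorem det_cyclicBidiagonal [CommRing R] (x y : Fin (n + 2) → R) :
    (cyclicBidiagonal x y).det = ∏ i, x i - ∏ i, -y i := by
  have hvanish : ∀ σ ∉ ({1, finRotate (n + 2)} : Finset (Equiv.Perm (Fin (n + 2)))),
      Equiv.Perm.sign σ • ∏ i, (cyclicBidiagonal x y)ᵀ (σ i) i = 0 := by
    intro σ hσ
    simp only [mem_insert, mem_singleton, not_or] at hσ
    obtain ⟨i, hi⟩ : ∃ i, ¬(σ i = i ∨ σ i = i + 1) := by
      by_contra! h
      exact (Equiv.Perm.eq_one_or_eq_finRotate h).elim hσ.1 hσ.2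
    push Not at hi
    rw [prod_eq_zero (mem_univ i) (by simp [cyclicBidiagonal, hi.1, hi.2]), smul_zero]
  have hne : (1 : Equiv.Perm (Fin (n + 2))) ≠ finRotate (n + 2) := fun h =>
    (Fin.add_one_ne_self 0) (by rw [← finRotate_apply, ← h, Equiv.Perm.one_apply])
  rw [← det_transpose, det_apply, ← sum_subset (subset_univ _) fun σ _ => hvanish σ,
    sum_pair hne]
  simp [cyclicBidiagonal, finRotate_apply, sign_finRotate, prod_neg, pow_succ,
    Units.smul_def, sub_eq_add_neg]

theorem cyclicBidiagonal_transpose_mul_apply [Semiring R] {m : Type*} [Fintype m]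
    (x y : Fin (n + 2) → R) (N : Matrix (Fin (n + 2)) m R) (i : Fin (n + 2)) (j : m) :
    ((cyclicBidiagonal x y)ᵀ * N) i j = x i * N i j + y (i - 1) * N (i - 1) j := by
  rw [mul_apply, Fintype.sum_eq_add i (i - 1) i.sub_one_ne_self.symm]
  · simp [cyclicBidiagonal, i.sub_one_ne_self.symm]
  · rintro k ⟨hki, hki'⟩
    have : i ≠ k + 1 := fun h => hki' (by rw [h, add_sub_cancel_right])
    simp [cyclicBidiagonal, Ne.symm hki, this]

variable [Field F]

theorem cyclicTridiagonal_eq_transpose_mul {t a b : Fin (n + 3) → F} (ht : ∀ i, t i ≠ 0)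
    (hab : ∀ i, a i * b i = t i ^ 2) :
    cyclicTridiagonal (fun i => t (i - 1) + t i) a b =
      (cyclicBidiagonal t b)ᵀ * cyclicBidiagonal 1 (fun i => a i / t i) := by
  ext i j
  rw [cyclicBidiagonal_transpose_mul_apply]
  have h₁ := i.add_one_ne_self
  have h₂ := i.sub_one_ne_self
  have h₃ := i.add_one_ne_sub_one
  by_cases hdiag : j = i
  · have hprev : b (i - 1) * (a (i - 1) / t (i - 1)) = t (i - 1) := by
      rw [mul_div_assoc', mul_comm, hab, sq, mul_div_cancel_right₀ _ (ht _)]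
    simp [hdiag, cyclicTridiagonal, cyclicBidiagonal, h₂.symm, hprev, add_comm]
  by_cases hsucc : j = i + 1
  · simp [hsucc, cyclicTridiagonal, cyclicBidiagonal, h₁, h₃, mul_div_cancel₀ _ (ht i)]
  by_cases hpred : j = i - 1
  · simp [hpred, cyclicTridiagonal, cyclicBidiagonal, h₂, h₃.symm]
  have hpred' : i ≠ j + 1 := fun h => hpred (by rw [h, add_sub_cancel_right])
  simp [cyclicTridiagonal, cyclicBidiagonal, hdiag, hsucc, hpred, hpred']

theorem det_cyclicTridiagonal {t a b : Fin (n + 3) → F} (ht : ∀ i, t i ≠ 0)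
    (hab : ∀ i, a i * b i = t i ^ 2) :
    (cyclicTridiagonal (fun i => t (i - 1) + t i) a b).det =
      2 * ∏ i, t i - ∏ i, -a i - ∏ i, -b i := by
  have hT : ∏ i, t i ≠ 0 := prod_ne_zero_iff.mpr fun i _ => ht i
  have hAB : (∏ i, -a i) * ∏ i, -b i = (∏ i, t i) ^ 2 := by
    rw [← prod_mul_distrib, ← prod_pow]
    exact prod_congr rfl fun i _ => by rw [neg_mul_neg, hab]
  rw [cyclicTridiagonal_eq_transpose_mul ht hab, det_mul, det_transpose, det_cyclicBidiagonal,
    det_cyclicBidiagonal]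
  simp only [Pi.one_apply, prod_const_one, ← neg_div, prod_div_distrib]
  field_simp
  linear_combination hAB

end Matrix

section CycleGraph

variable {n : ℕ}

theorem cycleGraph_adj_iff {i j : Fin (n + 2)} :
    (cycleGraph (n + 2)).Adj i j ↔ j = i + 1 ∨ i = j + 1 := by
  rw [cycleGraph_adj, sub_eq_iff_eq_add', sub_eq_iff_eq_add', or_comm]

theorem mem_edgeSet_cycleGraph {e : Sym2 (Fin (n + 2))} :
    e ∈ (cycleGraph (n + 2)).edgeSet ↔ ∃ i, s(i, i + 1) = e := by
  induction e using Sym2.ind with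
  | _ u v =>
    rw [mem_edgeSet, cycleGraph_adj_iff]
    constructor
    · rintro (rfl | rfl)
      exacts [⟨u, rfl⟩, ⟨v, Sym2.eq_swap⟩]
    · rintro ⟨i, hi⟩
      rcases Sym2.eq_iff.mp hi with ⟨rfl, rfl⟩ | ⟨rfl, rfl⟩
      exacts [.inl rfl, .inr rfl]

theorem injective_sym2_mk_add_one : Function.Injective fun i : Fin (n + 3) => s(i, i + 1) := by
  intro i j h
  rcases Sym2.eq_iff.mp h with ⟨h, -⟩ | ⟨rfl, h⟩
  · exact h
  · exact absurd (eq_sub_of_add_eq h) j.add_one_ne_sub_one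

theorem prod_filter_mem_edgeSet_cycleGraph {M : Type*} [CommMonoid M]
    (w : Sym2 (Fin (n + 3)) → M) :
    ∏ e ∈ univ.filter (fun e => e ∈ (cycleGraph (n + 3)).edgeSet), w e = ∏ i, w s(i, i + 1) := by
  rw [← prod_image fun i _ j _ h => injective_sym2_mk_add_one h]
  congr 1
  ext e
  simp [mem_edgeSet_cycleGraph]

variable [Field F]

theorem sgGDeg_cycleGraph (s : Sym2 (Fin (n + 3)) → F) (v : Fin (n + 3)) :
    sgGDeg (cycleGraph (n + 3)) s v = s s(v - 1, v) + s s(v, v + 1) := by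
  have hpair : s s(v - 1, v) + s s(v, v + 1) = ∑ i ∈ {v - 1, v}, s s(i, i + 1) := by
    rw [sum_pair v.sub_one_ne_self, sub_add_cancel]
  rw [sgGDeg, hpair, ← sum_image fun i _ j _ h => injective_sym2_mk_add_one h]
  congr 1
  ext e
  simp only [mem_filter, mem_univ, true_and, mem_image, mem_insert, mem_singleton,
    mem_edgeSet_cycleGraph]
  constructor
  · rintro ⟨⟨i, rfl⟩, hv⟩
    rcases Sym2.mem_iff.mp hv with rfl | rfl
    exacts [⟨v, .inr rfl, rfl⟩, ⟨i, .inl (add_sub_cancel_right i 1).symm, rfl⟩]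
  · rintro ⟨i, rfl | rfl, rfl⟩
    · exact ⟨⟨_, rfl⟩, by simp⟩
    · exact ⟨⟨_, rfl⟩, Sym2.mem_mk_left _ _⟩

theorem sgGLap_cycleGraph (φ : Fin (n + 3) → Fin (n + 3) → F) (s : Sym2 (Fin (n + 3)) → F) :
    sgGLap (cycleGraph (n + 3)) φ s =
      cyclicTridiagonal (fun i => s s(i - 1, i) + s s(i, i + 1)) (fun i => -φ i (i + 1))
        (fun i => -φ (i + 1) i) := by
  ext i j
  have h₁ := i.add_one_ne_self
  have h₂ := i.sub_one_ne_self
  have h₃ := i.add_one_ne_sub_one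
  by_cases hdiag : j = i
  · simp [hdiag, sgGLap, sgAdj, cyclicTridiagonal, sgGDeg_cycleGraph]
  by_cases hsucc : j = i + 1
  · simp [hsucc, sgGLap, sgAdj, cyclicTridiagonal, h₁, cycleGraph_adj_iff]
  by_cases hpred : j = i - 1
  · simp [hpred, sgGLap, sgAdj, cyclicTridiagonal, diagonal_apply_ne _ h₂.symm, h₃.symm,
      cycleGraph_adj_iff]
  have hpred' : i ≠ j + 1 := fun h => hpred (by rw [h, add_sub_cancel_right])
  simp [sgGLap, sgAdj, cyclicTridiagonal, hdiag, hsucc, hpred', cycleGraph_adj_iff, Ne.symm hdiag]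

end CycleGraph

theorem skewGainCycle_gLaplacian_det_general
    [Field F] (m : ℕ)
    (f : F → F) (hf1 : f 1 = 1)
    (hfmul : ∀ x y : F, f (x * y) = f x * f y)
    (φ : Fin (m + 3) → Fin (m + 3) → F)
    (hφ0 : ∀ u v, (cycleGraph (m + 3)).Adj u v → φ u v ≠ 0)
    (hφf : ∀ u v, (cycleGraph (m + 3)).Adj u v → φ v u = f (φ u v))
    (s : Sym2 (Fin (m + 3)) → F)
    (hs : ∀ u v, (cycleGraph (m + 3)).Adj u v → s s(u, v) ^ 2 = φ u v * f (φ u v)) :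
    (sgGLap (cycleGraph (m + 3)) φ s).det =
      2 * (∏ e ∈ Finset.univ.filter
            (fun e : Sym2 (Fin (m + 3)) => e ∈ (cycleGraph (m + 3)).edgeSet), s e) -
        ((∏ i : Fin (m + 3), φ i (i + 1)) + f (∏ i : Fin (m + 3), φ i (i + 1))) := by
  let fHom : F →* F := ⟨⟨f, hf1⟩, hfmul⟩
  have hadj (i : Fin (m + 3)) : (cycleGraph (m + 3)).Adj i (i + 1) :=
    cycleGraph_adj_iff.mpr (.inl rfl)
  have hrev (i : Fin (m + 3)) : φ (i + 1) i = f (φ i (i + 1)) := hφf _ _ (hadj i)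
  have hab (i : Fin (m + 3)) : -φ i (i + 1) * -φ (i + 1) i = s s(i, i + 1) ^ 2 := by
    rw [neg_mul_neg, hs _ _ (hadj i), hrev]
  have ht (i : Fin (m + 3)) : s s(i, i + 1) ≠ 0 := by
    have hφ := hφ0 _ _ (hadj i)
    refine pow_ne_zero_iff two_ne_zero |>.mp ?_
    rw [hs _ _ (hadj i)]
    exact mul_ne_zero hφ ((IsUnit.mk0 _ hφ).map fHom).ne_zero
  have hdet := det_cyclicTridiagonal ht hab
  simp only [sub_add_cancel, neg_neg] at hdet
  have hfprod : f (∏ i, φ i (i + 1)) = ∏ i, f (φ i (i + 1)) := map_prod fHom _ _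
  rw [sgGLap_cycleGraph, hdet, prod_filter_mem_edgeSet_cycleGraph,
    prod_congr rfl fun i _ => hrev i, hfprod]
  ring

/-- **Determinant of the g-Laplacian of a skew gain cycle** (Theorem 3.8).
For a skew gain graph on the cycle `C_n` with `n = m + 3 ≥ 3` vertices (vertices `Fin n` in
cyclic order, so that `φ(C_n) = Π_i φ(i, i+1)`),
`det L_g(Φ_f) = 2 Π_{e ∈ E(C_n)} s(e) - (φ(C_n) + f(φ(C_n)))`, where each `s e` is a chosen
square root of `g(φ(e))`. -/
theorem skewGainCycle_gLaplacian_det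
    [Field F] [CharZero F] (m : ℕ)
    (f : F → F) (hf0 : f 0 = 0) (hf1 : f 1 = 1)
    (hfmul : ∀ x y : F, f (x * y) = f x * f y) (hfinv : ∀ x : F, f (f x) = x)
    (φ : Fin (m + 3) → Fin (m + 3) → F)
    (hφ0 : ∀ u v, (cycleGraph (m + 3)).Adj u v → φ u v ≠ 0)
    (hφf : ∀ u v, (cycleGraph (m + 3)).Adj u v → φ v u = f (φ u v))
    (s : Sym2 (Fin (m + 3)) → F)
    (hs : ∀ u v, (cycleGraph (m + 3)).Adj u v → s s(u, v) ^ 2 = φ u v * f (φ u v)) :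
    (sgGLap (cycleGraph (m + 3)) φ s).det =
      2 * (∏ e ∈ Finset.univ.filter
            (fun e : Sym2 (Fin (m + 3)) => e ∈ (cycleGraph (m + 3)).edgeSet), s e) -
        ((∏ i : Fin (m + 3), φ i (i + 1)) + f (∏ i : Fin (m + 3), φ i (i + 1))) :=
  skewGainCycle_gLaplacian_det_general m f hf1 hfmul φ hφ0 hφf s hs
end
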